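/- There exists a universal constant C > 0 such that the following holds. Let x_1,...,x_n be independent uniform ±1 random variables and a_i ≥ 0 with ∑ a_i² = 1. If t ≥ 0 and ε = Pr[∑ a_i x_i > t], then Pr[∑ a_i x_i > t + C/√(log(1/ε))] ≤ ε/2. -/

import Mathlib

open Finset

noncomputable section
open scoped Classical

/-- The ±1 value associated to a Boolean bit. -/
def sgn1 (b : Bool) : ℝ := if b then 1 else -1

/-- Probability of an event under the uniform measure on `{-1,1}^n`. -/
def cubePr (n : ℕ) (P : (Fin n → Bool) → Prop) : ℝ :=
  ((univ.filter P).card : ℝ) / 2 ^ n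

/-- Expectation of a function under the uniform measure on `{-1,1}^n`. -/
def cubeE (n : ℕ) (f : (Fin n → Bool) → ℝ) : ℝ := (∑ x, f x) / 2 ^ n

/-- The linear form `a · x = ∑ aᵢ xᵢ` on `{-1,1}^n`. -/
def lin (n : ℕ) (a : Fin n → ℝ) (x : Fin n → Bool) : ℝ := ∑ i, a i * sgn1 (x i)

/-- The halfspace `1{a · x > t}` as a 0/1-valued function. -/
def halfspace (n : ℕ) (a : Fin n → ℝ) (t : ℝ) (x : Fin n → Bool) : ℝ :=
  if t < lin n a x then 1 else 0

/-- The influence of coordinate `i` on `f`: the probability that flipping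
coordinate `i` changes the value of `f`. -/
def infl (n : ℕ) (i : Fin n) (f : (Fin n → Bool) → ℝ) : ℝ :=
  cubePr n (fun x => f x ≠ f (Function.update x i (!x i)))

/-- The degree-1 Fourier coefficient `f̂({i}) = E[f(x)·xᵢ]`. -/
def fCoeff (n : ℕ) (f : (Fin n → Bool) → ℝ) (i : Fin n) : ℝ :=
  cubeE n (fun x => f x * sgn1 (x i))

/-- The degree-1 Fourier weight `W¹(f) = ∑ᵢ f̂({i})²`. -/
def W1 (n : ℕ) (f : (Fin n → Bool) → ℝ) : ℝ := ∑ i, (fCoeff n f i) ^ 2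

/-!
Induction on `n`, with `S = ∑ aᵢ xᵢ`, `L = log (1/ε)` and shift `δ = 100/√L`; note `ε ≤ 1/2`
by symmetry.
If some coefficient is heavy, `L aᵢ² > log 2`, condition on `xᵢ`. When `t < aᵢ` the tail is at
least `1/4` and Hoeffding's bound at `t + δ ≥ 4` suffices. When `aᵢ ≤ t` both conditional
tails `q` are at most `2ε`, so `log (1/q) ≥ L - log 2 > L (1 - aᵢ²)`, and the induction
hypothesis for the renormalised remaining coefficients gives a shift of at most `δ`.
If all coefficients are light, the Stein-type identity `E[S ψ(S)] = ∑ aᵢ E[xᵢ ψ(S)]` with a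
ramp `ψ` rising on `[t, t + δ/2]` gives `(t + δ) δ Pr[S > t + δ] ≤ 4 Pr[t < S ≤ t + δ]`, which
halves the tail once `(t + δ) δ ≥ 4`. The alternative `(t + δ) δ < 4` forces `L > 2500` and
`t < √L/25`, and then the Paley–Zygmund inequality for `exp (√L S / 2)` gives
`ε ≥ exp (-7L/16) / 4`, which is absurd.
-/

section Cube

variable {n : ℕ}

lemma cubeE_mono {f g : (Fin n → Bool) → ℝ} (h : ∀ x, f x ≤ g x) : cubeE n f ≤ cubeE n g :=
  div_le_div_of_nonneg_right (sum_le_sum fun x _ => h x) (by positivity)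

lemma cubeE_add (f g : (Fin n → Bool) → ℝ) :
    cubeE n (fun x => f x + g x) = cubeE n f + cubeE n g := by
  simp only [cubeE, sum_add_distrib, add_div]

lemma cubeE_const_mul (c : ℝ) (f : (Fin n → Bool) → ℝ) :
    cubeE n (fun x => c * f x) = c * cubeE n f := by
  simp only [cubeE, ← mul_sum, mul_div_assoc]

lemma cubeE_sum {ι : Type*} (s : Finset ι) (f : ι → (Fin n → Bool) → ℝ) :
    cubeE n (fun x => ∑ i ∈ s, f i x) = ∑ i ∈ s, cubeE n (f i) := by
  simp only [cubeE, sum_comm (s := s), sum_div]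

lemma cubeE_const (c : ℝ) : cubeE n (fun _ => c) = c := by
  simp [cubeE]

lemma cubeE_comp_involutive {e : (Fin n → Bool) → (Fin n → Bool)} (he : Function.Involutive e)
    (f : (Fin n → Bool) → ℝ) : cubeE n (fun x => f (e x)) = cubeE n f := by
  rw [cubeE, cubeE, ← Equiv.sum_comp (he.toPerm e) f]
  rfl

lemma cubeE_mul_sq_le (f g : (Fin n → Bool) → ℝ) :
    cubeE n (fun x => f x * g x) ^ 2 ≤ cubeE n (fun x => f x ^ 2) * cubeE n (fun x => g x ^ 2) := by
  simp only [cubeE, div_pow, div_mul_div_comm, ← sq]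
  exact div_le_div_of_nonneg_right (sum_mul_sq_le_sq_mul_sq _ _ _) (by positivity)

lemma cubeE_succ (i : Fin (n + 1)) (f : (Fin (n + 1) → Bool) → ℝ) :
    cubeE (n + 1) f = (cubeE n (fun y => f (i.insertNth true y)) +
      cubeE n (fun y => f (i.insertNth false y))) / 2 := by
  have h := (Fin.insertNthEquiv (fun _ => Bool) i).sum_comp f
  rw [Fintype.sum_prod_type, Fintype.sum_bool] at h
  change (∑ y, f (i.insertNth true y)) + ∑ y, f (i.insertNth false y) = _ at h
  simp only [cubeE, ← h, pow_succ]
  ring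

lemma cubePr_eq_cubeE (P : (Fin n → Bool) → Prop) [DecidablePred P] :
    cubePr n P = cubeE n (fun x => if P x then 1 else 0) := by
  simp only [cubePr, cubeE, sum_boole]
  congr

lemma cubePr_nonneg (P : (Fin n → Bool) → Prop) : 0 ≤ cubePr n P := by
  unfold cubePr; positivity

lemma cubePr_mono {P Q : (Fin n → Bool) → Prop} (h : ∀ x, P x → Q x) :
    cubePr n P ≤ cubePr n Q := by
  simp only [cubePr_eq_cubeE]
  exact cubeE_mono fun x => by
    split_ifs with hP hQ <;> first | exact absurd (h x hP) hQ | norm_num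

lemma cubePr_congr {P Q : (Fin n → Bool) → Prop} (h : ∀ x, P x ↔ Q x) :
    cubePr n P = cubePr n Q := by
  congr 1; funext x; exact propext (h x)

lemma cubePr_and_add_and_not (P Q : (Fin n → Bool) → Prop) :
    cubePr n (fun x => P x ∧ Q x) + cubePr n (fun x => P x ∧ ¬ Q x) = cubePr n P := by
  simp only [cubePr_eq_cubeE, ← cubeE_add]
  congr 1; funext x; by_cases hP : P x <;> by_cases hQ : Q x <;> simp [hP, hQ]

lemma cubePr_add_cubePr_not (P : (Fin n → Bool) → Prop) :
    cubePr n P + cubePr n (fun x => ¬ P x) = 1 := by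
  rw [cubePr_eq_cubeE, cubePr_eq_cubeE, ← cubeE_add]
  convert cubeE_const (n := n) (1 : ℝ) using 2
  funext x
  by_cases hP : P x <;> simp [hP]

lemma cubePr_comp_not (P : (Fin n → Bool) → Prop) :
    cubePr n (fun x => P (fun j => !x j)) = cubePr n P := by
  simp only [cubePr_eq_cubeE]
  exact cubeE_comp_involutive (e := fun x j => !x j) (fun x => by simp)
    (fun x => if P x then 1 else 0)

lemma mul_cubePr_le_cubeE {f : (Fin n → Bool) → ℝ} (hf : ∀ x, 0 ≤ f x) (c : ℝ) :
    c * cubePr n (fun x => c ≤ f x) ≤ cubeE n f := by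
  rw [cubePr_eq_cubeE, ← cubeE_const_mul]
  exact cubeE_mono fun x => by split_ifs with h <;> simp [h, hf x]

lemma cubeE_sq_le_four_mul_cubePr_mul {f : (Fin n → Bool) → ℝ} (hf : ∀ x, 0 ≤ f x) :
    cubeE n f ^ 2 ≤ 4 * cubePr n (fun x => cubeE n f / 2 ≤ f x) * cubeE n (fun x => f x ^ 2) := by
  set m := cubeE n f
  let S := fun x => m / 2 ≤ f x
  have hm : 0 ≤ m := by simpa [cubeE_const] using cubeE_mono (n := n) hf
  have hS : m / 2 ≤ cubeE n (fun x => (if S x then 1 else 0) * f x) := by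
    have : m ≤ cubeE n (fun _ => m / 2) + cubeE n (fun x => (if S x then 1 else 0) * f x) := by
      rw [← cubeE_add]
      exact cubeE_mono fun x => by split_ifs with h <;> simp only [S] at h <;> linarith [hf x]
    rw [cubeE_const] at this
    linarith
  calc m ^ 2 = 4 * (m / 2) ^ 2 := by ring
    _ ≤ 4 * cubeE n (fun x => (if S x then 1 else 0) * f x) ^ 2 := by gcongr
    _ ≤ 4 * (cubeE n (fun x => (if S x then (1 : ℝ) else 0) ^ 2) * cubeE n (fun x => f x ^ 2)) := by
      gcongr; exact cubeE_mul_sq_le _ _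
    _ = 4 * cubePr n S * cubeE n (fun x => f x ^ 2) := by
      rw [cubePr_eq_cubeE, mul_assoc]; congr; funext x; split_ifs <;> simp

end Cube

section Linear

variable {n : ℕ}

lemma lin_not (a : Fin n → ℝ) (x : Fin n → Bool) : lin n a (fun j => !x j) = -lin n a x := by
  simp only [lin, ← sum_neg_distrib]
  congr 1; funext j; cases x j <;> simp [sgn1]

lemma lin_update (a : Fin n → ℝ) (x : Fin n → Bool) (i : Fin n) (b : Bool) :
    lin n a (Function.update x i b) = lin n a x + a i * (sgn1 b - sgn1 (x i)) := by
  have h : ∀ j, a j * sgn1 (Function.update x i b j) =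
      a j * sgn1 (x j) + if j = i then a i * (sgn1 b - sgn1 (x i)) else 0 := by
    intro j
    by_cases hj : j = i
    · subst hj
      simp only [Function.update_self, if_true]
      ring
    · simp [hj]
  simp only [lin, h, sum_add_distrib, sum_ite_eq', mem_univ, if_true]

lemma lin_insertNth (a : Fin (n + 1) → ℝ) (i : Fin (n + 1)) (b : Bool) (y : Fin n → Bool) :
    lin (n + 1) a (i.insertNth b y) = a i * sgn1 b + lin n (fun j => a (i.succAbove j)) y := by
  simp [lin, Fin.sum_univ_succAbove _ i]

lemma lin_div (a : Fin n → ℝ) (c : ℝ) (x : Fin n → Bool) :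
    lin n (fun j => a j / c) x = lin n a x / c := by
  simp only [lin, sum_div, div_mul_eq_mul_div]

lemma cubeE_exp_mul_lin (a : Fin n → ℝ) (c : ℝ) :
    cubeE n (fun x => Real.exp (c * lin n a x)) = ∏ i, Real.cosh (c * a i) := by
  have h : ∀ x : Fin n → Bool, Real.exp (c * lin n a x) = ∏ i, Real.exp (c * a i * sgn1 (x i)) := by
    intro x
    rw [lin, mul_sum, Real.exp_sum]
    simp only [mul_assoc]
  rw [cubeE, funext h, ← Fintype.prod_sum fun i (b : Bool) => Real.exp (c * a i * sgn1 b),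
    show (2 : ℝ) ^ n = ∏ _i : Fin n, (2 : ℝ) by simp, ← prod_div_distrib]
  congr 1; funext i
  simp [sgn1, Real.cosh_eq]

lemma cubeE_exp_mul_lin_le (a : Fin n → ℝ) (c : ℝ) :
    cubeE n (fun x => Real.exp (c * lin n a x)) ≤ Real.exp (c ^ 2 / 2 * ∑ i, a i ^ 2) := by
  rw [cubeE_exp_mul_lin, mul_sum, Real.exp_sum]
  exact prod_le_prod (fun i _ => (Real.cosh_pos _).le)
    fun i _ => (Real.cosh_le_exp_half_sq _).trans_eq (by ring_nf)

end Linear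

lemma Real.one_add_sq_div_four_le_cosh (x : ℝ) : 1 + x ^ 2 / 4 ≤ cosh x := by
  rw [← cosh_abs, ← sq_abs, cosh_eq]
  have := quadratic_le_exp_of_nonneg (abs_nonneg x)
  have := add_one_le_exp (-|x|)
  linarith

lemma Real.exp_sq_div_eight_le_cosh {x : ℝ} (hx : |x| ≤ 2) : exp (x ^ 2 / 8) ≤ cosh x := by
  have hx2 : x ^ 2 / 4 ≤ 1 := by nlinarith [sq_abs x, abs_nonneg x]
  calc exp (x ^ 2 / 8) ≤ 1 / (1 - x ^ 2 / 8) :=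
        exp_bound_div_one_sub_of_interval (by positivity) (by linarith)
    _ ≤ 1 + x ^ 2 / 4 := by
        rw [div_le_iff₀ (by linarith)]; nlinarith [sq_nonneg x]
    _ ≤ cosh x := one_add_sq_div_four_le_cosh x

def tailPr (n : ℕ) (a : Fin n → ℝ) (t : ℝ) : ℝ := cubePr n (fun x => t < lin n a x)

section Tail

variable {n : ℕ}

lemma tailPr_nonneg (a : Fin n → ℝ) (t : ℝ) : 0 ≤ tailPr n a t :=
  cubePr_nonneg _

lemma tailPr_anti (a : Fin n → ℝ) {s t : ℝ} (h : s ≤ t) : tailPr n a t ≤ tailPr n a s :=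
  cubePr_mono fun _ hx => h.trans_lt hx

lemma tailPr_le_half (a : Fin n → ℝ) {t : ℝ} (ht : 0 ≤ t) : tailPr n a t ≤ 1 / 2 := by
  have hflip : cubePr n (fun x => lin n a x < -t) = tailPr n a t := by
    rw [← cubePr_comp_not]; simp only [lin_not, neg_lt_neg_iff]; rfl
  have hle : cubePr n (fun x => lin n a x < -t) ≤ cubePr n (fun x => ¬ t < lin n a x) :=
    cubePr_mono fun x hx => by linarith
  have := cubePr_add_cubePr_not (fun x => t < lin n a x)
  unfold tailPr at *
  linarith

lemma half_le_tailPr (a : Fin n → ℝ) {t : ℝ} (ht : t < 0) : 1 / 2 ≤ tailPr n a t := by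
  have hflip : cubePr n (fun x => lin n a x < 0) = tailPr n a 0 := by
    rw [← cubePr_comp_not]; simp only [lin_not, neg_lt_zero]; rfl
  have hle : cubePr n (fun x => ¬ t < lin n a x) ≤ cubePr n (fun x => lin n a x < 0) :=
    cubePr_mono fun x hx => by linarith [not_lt.mp hx]
  have := cubePr_add_cubePr_not (fun x => t < lin n a x)
  have := tailPr_anti a ht.le
  unfold tailPr at *
  linarith

lemma tailPr_succ (a : Fin (n + 1) → ℝ) (t : ℝ) (i : Fin (n + 1)) :
    tailPr (n + 1) a t = (tailPr n (fun j => a (i.succAbove j)) (t - a i)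
      + tailPr n (fun j => a (i.succAbove j)) (t + a i)) / 2 := by
  simp only [tailPr, cubePr_eq_cubeE, cubeE_succ i, lin_insertNth, sgn1, if_true,
    Bool.false_eq_true, if_false, mul_one, mul_neg, sub_lt_iff_lt_add', lt_neg_add_iff_add_lt,
    add_comm (a i)]

lemma tailPr_div (a : Fin n → ℝ) (t : ℝ) {c : ℝ} (hc : 0 < c) :
    tailPr n (fun j => a j / c) (t / c) = tailPr n a t := by
  simp only [tailPr, lin_div, div_lt_div_iff_of_pos_right hc]

lemma tailPr_le_exp (a : Fin n → ℝ) (hsum : ∑ i, a i ^ 2 = 1) {t : ℝ} (ht : 0 ≤ t) :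
    tailPr n a t ≤ Real.exp (-(t ^ 2 / 2)) := by
  have hMarkov :=
    mul_cubePr_le_cubeE (fun x => (Real.exp_pos (t * lin n a x)).le) (Real.exp (t ^ 2))
  have hmgf := cubeE_exp_mul_lin_le a t
  have hsub : tailPr n a t ≤ cubePr n (fun x => Real.exp (t ^ 2) ≤ Real.exp (t * lin n a x)) :=
    cubePr_mono fun x hx => Real.exp_le_exp.mpr (by nlinarith)
  rw [hsum, mul_one] at hmgf
  rw [show -(t ^ 2 / 2) = t ^ 2 / 2 - t ^ 2 by ring, Real.exp_sub, le_div_iff₀ (Real.exp_pos _)]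
  nlinarith [Real.exp_pos (t ^ 2)]

lemma exp_neg_le_four_mul_tailPr (a : Fin n → ℝ) (hsum : ∑ i, a i ^ 2 = 1) {l t : ℝ}
    (hl : 0 < l) (hla : ∀ i, |l * a i| ≤ 2) (ht : t < l / 8 - Real.log 2 / l) :
    Real.exp (-(7 / 4 * l ^ 2)) ≤ 4 * tailPr n a t := by
  set Z := fun x => Real.exp (l * lin n a x) with hZ
  have hmean : Real.exp (l ^ 2 / 8) ≤ cubeE n Z := by
    rw [cubeE_exp_mul_lin]
    calc Real.exp (l ^ 2 / 8) = ∏ i, Real.exp ((l * a i) ^ 2 / 8) := by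
          rw [← Real.exp_sum]; congr 1
          simp only [mul_pow, ← sum_div, ← mul_sum, hsum, mul_one]
      _ ≤ ∏ i, Real.cosh (l * a i) := prod_le_prod (fun _ _ => (Real.exp_pos _).le)
          fun i _ => Real.exp_sq_div_eight_le_cosh (hla i)
  have hsq : cubeE n (fun x => Z x ^ 2) ≤ Real.exp (2 * l ^ 2) := by
    have h := cubeE_exp_mul_lin_le a (2 * l)
    rw [hsum, mul_one, show (2 * l) ^ 2 / 2 = 2 * l ^ 2 by ring] at h
    refine Eq.trans_le ?_ h
    congr 1; funext x; rw [hZ, ← Real.exp_nat_mul]; ring_nf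
  have hsub : cubePr n (fun x => cubeE n Z / 2 ≤ Z x) ≤ tailPr n a t := by
    refine cubePr_mono fun x hx => ?_
    have h1 : l ^ 2 / 8 - Real.log 2 ≤ l * lin n a x := by
      rw [← Real.exp_le_exp, Real.exp_sub, Real.exp_log two_pos]
      exact (div_le_div_of_nonneg_right hmean two_pos.le).trans hx
    have h2 : l * t < l ^ 2 / 8 - Real.log 2 :=
      calc l * t < l * (l / 8 - Real.log 2 / l) := mul_lt_mul_of_pos_left ht hl
        _ = l ^ 2 / 8 - Real.log 2 := by field_simp
    exact lt_of_mul_lt_mul_left (h2.trans_le h1) hl.le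
  have hPZ := cubeE_sq_le_four_mul_cubePr_mul (f := Z) fun x => (Real.exp_pos _).le
  rw [show -(7 / 4 * l ^ 2) = l ^ 2 / 4 - 2 * l ^ 2 by ring, Real.exp_sub,
    div_le_iff₀ (Real.exp_pos _)]
  calc Real.exp (l ^ 2 / 4) = Real.exp (l ^ 2 / 8) ^ 2 := by rw [← Real.exp_nat_mul]; ring_nf
    _ ≤ cubeE n Z ^ 2 := by gcongr
    _ ≤ 4 * cubePr n (fun x => cubeE n Z / 2 ≤ Z x) * cubeE n (fun x => Z x ^ 2) := hPZ
    _ ≤ 4 * tailPr n a t * Real.exp (2 * l ^ 2) := by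
      have h0 : 0 ≤ cubeE n (fun x => Z x ^ 2) := by simp only [cubeE]; positivity
      have h1 : 0 ≤ tailPr n a t := cubePr_nonneg _
      gcongr

end Tail

section Stein

variable {n : ℕ}

lemma cubeE_sgn1_mul_le (i : Fin n) {F G : (Fin n → Bool) → ℝ} (hG : ∀ x, 0 ≤ G x)
    (hFG : ∀ x, x i = true → F x - F (Function.update x i false) ≤ G x) :
    cubeE n (fun x => sgn1 (x i) * F x) ≤ cubeE n G := by
  have hflip : cubeE n (fun x => if x i then 0 else F x) =
      cubeE n (fun x => if x i then F (Function.update x i false) else 0) := by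
    rw [← cubeE_comp_involutive (e := fun x => Function.update x i (!x i)) fun x => by simp]
    congr 1; funext x; cases x i <;> simp
  have hsplit : cubeE n (fun x => sgn1 (x i) * F x) + cubeE n (fun x => if x i then 0 else F x) =
      cubeE n (fun x => if x i then F x - F (Function.update x i false) else 0) +
        cubeE n (fun x => if x i then F (Function.update x i false) else 0) := by
    simp only [← cubeE_add]
    congr 1; funext x; cases x i <;> simp [sgn1]
  have hle : cubeE n (fun x => if x i then F x - F (Function.update x i false) else 0) ≤
      cubeE n G :=
    cubeE_mono fun x => by cases h : x i <;> simp [h, hG x, hFG x]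
  linarith

lemma mul_tailPr_le (a : Fin n → ℝ) (ha : ∀ i, 0 ≤ a i) (hsum : ∑ i, a i ^ 2 = 1) {t δ : ℝ}
    (ht : 0 ≤ t) (hδ : 0 ≤ δ) (hsmall : ∀ i, a i ≤ δ / 4) :
    (t + δ) * δ * tailPr n a (t + δ) ≤
      4 * cubePr n (fun x => t < lin n a x ∧ lin n a x ≤ t + δ) := by
  set ψ : ℝ → ℝ := fun s => max 0 (min (s - t) (δ / 2)) with hψ
  set W := fun x => t < lin n a x ∧ lin n a x ≤ t + δ
  have hlow : ∀ s, (t + δ) * (δ / 2) * (if t + δ < s then 1 else 0) ≤ s * ψ s := by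
    intro s
    simp only [hψ, max_def, min_def]
    split_ifs <;> nlinarith
  -- flipping `xᵢ` moves `S` by `2 aᵢ ≤ δ / 2`, so `ψ` changes only when `t < S ≤ t + δ`
  have hflip : ∀ i x, x i = true → ψ (lin n a x) - ψ (lin n a (Function.update x i false)) ≤
      2 * a i * (if W x then 1 else 0) := by
    intro i x hx
    have := ha i
    have := hsmall i
    simp only [lin_update, hx, sgn1, W, hψ, if_true, Bool.false_eq_true, if_false]
    generalize lin n a x = s
    by_cases hW : t < s ∧ s ≤ t + δ
    · rw [if_pos hW]; simp only [max_def, min_def]; split_ifs <;> linarith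
    · rw [if_neg hW, not_and_or, not_lt, not_le] at *
      rcases hW with hW | hW <;> simp only [max_def, min_def] <;> split_ifs <;> linarith
  calc (t + δ) * δ * tailPr n a (t + δ)
      = 2 * cubeE n (fun x => (t + δ) * (δ / 2) * (if t + δ < lin n a x then 1 else 0)) := by
        rw [cubeE_const_mul, tailPr, cubePr_eq_cubeE]; ring
    _ ≤ 2 * cubeE n (fun x => lin n a x * ψ (lin n a x)) := by
        gcongr; exact cubeE_mono fun x => hlow _
    _ = 2 * ∑ i, a i * cubeE n (fun x => sgn1 (x i) * ψ (lin n a x)) := by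
        have hexp : ∀ x, lin n a x * ψ (lin n a x) = ∑ i, a i * (sgn1 (x i) * ψ (lin n a x)) :=
          fun x => by rw [lin, sum_mul]; simp only [mul_assoc]
        simp only [hexp, cubeE_sum, cubeE_const_mul]
    _ ≤ 2 * ∑ i, a i * (2 * a i * cubePr n W) := by
        refine mul_le_mul_of_nonneg_left (sum_le_sum fun i _ => mul_le_mul_of_nonneg_left ?_ (ha i))
          two_pos.le
        rw [cubePr_eq_cubeE, ← cubeE_const_mul]
        exact cubeE_sgn1_mul_le i (fun x => by have := ha i; positivity) (hflip i)
    _ = 4 * cubePr n W := by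
        have : ∑ i, a i * (2 * a i * cubePr n W) = 2 * cubePr n W * ∑ i, a i ^ 2 := by
          rw [mul_sum]; exact sum_congr rfl fun i _ => by ring
        rw [this, hsum]; ring

lemma tailPr_add_le_half_of_small (a : Fin n → ℝ) (ha : ∀ i, 0 ≤ a i) (hsum : ∑ i, a i ^ 2 = 1)
    {t δ : ℝ} (ht : 0 ≤ t) (hδ : 0 ≤ δ) (hsmall : ∀ i, a i ≤ δ / 4) (hshift : 4 ≤ (t + δ) * δ) :
    tailPr n a (t + δ) ≤ tailPr n a t / 2 := by
  have hstein := mul_tailPr_le a ha hsum ht hδ hsmall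
  have hsplit := cubePr_and_add_and_not (fun x => t < lin n a x) (fun x => t + δ < lin n a x)
  simp only [not_lt] at hsplit
  rw [cubePr_congr fun x => ⟨fun h => h.2, fun h => ⟨by linarith [h], h⟩⟩] at hsplit
  have := tailPr_nonneg a (t + δ)
  unfold tailPr at *
  nlinarith

end Stein

def HasLocalChernoff (C : ℝ) (n : ℕ) : Prop :=
  ∀ (a : Fin n → ℝ) (t : ℝ), (∀ i, 0 ≤ a i) → ∑ i, a i ^ 2 = 1 → 0 ≤ t → 0 < tailPr n a t →
    tailPr n a (t + C / √(Real.log (1 / tailPr n a t))) ≤ tailPr n a t / 2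

section Induction

variable {n : ℕ}

lemma HasLocalChernoff.tailPr_add_le {C : ℝ} (h : HasLocalChernoff C n) {b : Fin n → ℝ}
    (hb : ∀ j, 0 ≤ b j) {u δ : ℝ} (hu : 0 ≤ u) (hq : 0 < tailPr n b u)
    (hδ : C * √(∑ j, b j ^ 2) ≤ δ * √(Real.log (1 / tailPr n b u))) :
    tailPr n b (u + δ) ≤ tailPr n b u / 2 := by
  set q := tailPr n b u
  set σ := √(∑ j, b j ^ 2)
  have hσ : 0 < σ := by
    refine Real.sqrt_pos.2 (lt_of_le_of_ne (by positivity) fun h0 => hq.ne' ?_)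
    have hb0 : ∀ j, b j = 0 := fun j =>
      pow_eq_zero_iff two_ne_zero |>.1 <|
        (sum_eq_zero_iff_of_nonneg fun j _ => sq_nonneg (b j)).1 h0.symm j (mem_univ j)
    simp only [q, tailPr, lin, hb0, zero_mul, sum_const_zero, cubePr_eq_cubeE, not_lt.2 hu,
      if_false, cubeE_const]
  have hlq : 0 < √(Real.log (1 / q)) :=
    Real.sqrt_pos.2 <| Real.log_pos <| one_lt_one_div hq (by linarith [tailPr_le_half b hu])
  have hnorm : ∑ j, (b j / σ) ^ 2 = 1 := by
    simp only [div_pow, ← sum_div, σ, Real.sq_sqrt (sum_nonneg fun j _ => sq_nonneg (b j))]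
    exact div_self (Real.sqrt_pos.1 hσ).ne'
  have hIH := h (fun j => b j / σ) (u / σ) (fun j => div_nonneg (hb j) hσ.le) hnorm
    (div_nonneg hu hσ.le) (by rwa [tailPr_div b u hσ])
  rw [tailPr_div b u hσ, show u / σ + C / √(Real.log (1 / q)) =
    (u + σ * C / √(Real.log (1 / q))) / σ by field_simp, tailPr_div b _ hσ] at hIH
  refine (tailPr_anti b ?_).trans hIH
  have : σ * C / √(Real.log (1 / q)) ≤ δ := by rw [div_le_iff₀ hlq]; linarith
  linarith

lemma HasLocalChernoff.tailPr_add_le_half_of_heavy {C : ℝ} (h : HasLocalChernoff C n)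
    (hC : 0 ≤ C) {a : Fin (n + 1) → ℝ} (ha : ∀ i, 0 ≤ a i) (hsum : ∑ i, a i ^ 2 = 1) {t : ℝ}
    (hε : 0 < tailPr (n + 1) a t) {i : Fin (n + 1)}
    (hheavy : Real.log 2 < Real.log (1 / tailPr (n + 1) a t) * a i ^ 2) (hit : a i ≤ t) :
    tailPr (n + 1) a (t + C / √(Real.log (1 / tailPr (n + 1) a t))) ≤ tailPr (n + 1) a t / 2 := by
  set ε := tailPr (n + 1) a t
  set L := Real.log (1 / ε)
  set b : Fin n → ℝ := fun j => a (i.succAbove j)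
  have hbsum : ∑ j, b j ^ 2 = 1 - a i ^ 2 := by
    have := Fin.sum_univ_succAbove (fun j => a j ^ 2) i
    linarith
  have hai : a i ^ 2 ≤ 1 := by linarith [sum_nonneg fun j (_ : j ∈ univ) => sq_nonneg (b j)]
  have hL : 0 < L := by nlinarith [Real.log_pos one_lt_two]
  have key : ∀ u, 0 ≤ u → tailPr n b u ≤ 2 * ε → tailPr n b (u + C / √L) ≤ tailPr n b u / 2 := by
    intro u hu hqε
    rcases (tailPr_nonneg b u).eq_or_lt with hq | hq
    · have := tailPr_anti b (le_add_of_nonneg_right (by positivity) : u ≤ u + C / √L)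
      linarith
    refine h.tailPr_add_le (fun j => ha _) hu hq ?_
    have hlq : L * (1 - a i ^ 2) ≤ Real.log (1 / tailPr n b u) := by
      have := Real.log_le_log (by positivity) (one_div_le_one_div_of_le hq hqε)
      rw [show 1 / (2 * ε) = 1 / ε / 2 by ring, Real.log_div (by positivity) two_ne_zero] at this
      nlinarith
    rw [hbsum, div_mul_eq_mul_div, le_div_iff₀ (Real.sqrt_pos.2 hL), mul_assoc,
      ← Real.sqrt_mul (by linarith)]
    gcongr
    linarith
  have hsplit := tailPr_succ a t i
  have hm := key (t - a i) (by linarith) (by linarith [tailPr_nonneg b (t + a i)])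
  have hp := key (t + a i) (by linarith [ha i]) (by linarith [tailPr_nonneg b (t - a i)])
  rw [tailPr_succ a _ i, show t + C / √L - a i = t - a i + C / √L by ring,
    show t + C / √L + a i = t + a i + C / √L by ring]
  linarith

lemma tailPr_add_le_half_of_lt_coeff {a : Fin (n + 1) → ℝ} (hsum : ∑ i, a i ^ 2 = 1) {t : ℝ}
    (ht : 0 ≤ t) {i : Fin (n + 1)} (hti : t < a i) :
    tailPr (n + 1) a (t + 100 / √(Real.log (1 / tailPr (n + 1) a t))) ≤
      tailPr (n + 1) a t / 2 := by
  set ε := tailPr (n + 1) a t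
  have hε4 : 1 / 4 ≤ ε := by
    have := half_le_tailPr (fun j => a (i.succAbove j)) (sub_neg.2 hti)
    have := tailPr_succ a t i
    linarith [tailPr_nonneg (fun j => a (i.succAbove j)) (t + a i)]
  have hε2 : ε ≤ 1 / 2 := tailPr_le_half a ht
  set L := Real.log (1 / ε)
  have hL : 0 < L := Real.log_pos (one_lt_one_div (by linarith) (by linarith))
  have hL2 : L < 2 := by
    have h4 : L ≤ Real.log 4 :=
      Real.log_le_log (by positivity) (by rw [div_le_iff₀ (by linarith)]; linarith)
    rw [show (4 : ℝ) = 2 ^ 2 by norm_num, Real.log_pow, Nat.cast_ofNat] at h4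
    linarith [Real.log_two_lt_d9]
  have hδ : 4 ≤ 100 / √L := by
    rw [le_div_iff₀ (Real.sqrt_pos.2 hL)]
    nlinarith [Real.sq_sqrt hL.le, Real.sqrt_nonneg L]
  calc tailPr (n + 1) a (t + 100 / √L) ≤ tailPr (n + 1) a 4 := tailPr_anti a (by linarith)
    _ ≤ Real.exp (-(4 ^ 2 / 2)) := tailPr_le_exp a hsum (by norm_num)
    _ ≤ 1 / 8 := by
      rw [Real.exp_neg, inv_eq_one_div]
      exact one_div_le_one_div_of_le (by norm_num) (by linarith [Real.add_one_le_exp (4 ^ 2 / 2)])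
    _ ≤ ε / 2 := by linarith

lemma tailPr_add_le_half_of_light {a : Fin n → ℝ} (ha : ∀ i, 0 ≤ a i) (hsum : ∑ i, a i ^ 2 = 1)
    {t : ℝ} (ht : 0 ≤ t) (hε : 0 < tailPr n a t)
    (hlight : ∀ i, Real.log (1 / tailPr n a t) * a i ^ 2 ≤ Real.log 2) :
    tailPr n a (t + 100 / √(Real.log (1 / tailPr n a t))) ≤ tailPr n a t / 2 := by
  set ε := tailPr n a t
  set L := Real.log (1 / ε)
  have hlog2 := Real.log_two_lt_d9
  have hlog2' := Real.log_pos one_lt_two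
  have hL : Real.log 2 ≤ L :=
    Real.log_le_log two_pos (by rw [le_div_iff₀ hε]; linarith [tailPr_le_half a ht])
  set s := √L
  have hs : 0 < s := Real.sqrt_pos.2 (by linarith)
  have hs2 : s ^ 2 = L := Real.sq_sqrt (by linarith)
  set δ := 100 / s
  have hδs : δ * s = 100 := div_mul_cancel₀ _ hs.ne'
  have hsa : ∀ i, s * a i ≤ 1 := fun i => by nlinarith [hlight i, ha i]
  have hshift : 4 ≤ (t + δ) * δ := by
    by_contra! hlt
    have hδpos : 0 < δ := by positivity
    have hs50 : 50 < s := by nlinarith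
    have hts : 25 * t < s := by nlinarith
    have hthr : t < s / 2 / 8 - Real.log 2 / (s / 2) := by
      rw [show s / 2 / 8 - Real.log 2 / (s / 2) = (s ^ 2 - 32 * Real.log 2) / (16 * s) by
        field_simp; ring, lt_div_iff₀ (by positivity)]
      nlinarith
    have hAC := exp_neg_le_four_mul_tailPr a hsum (by positivity)
      (fun i => by rw [abs_le]; constructor <;> nlinarith [hsa i, ha i]) hthr
    have hεL : ε = Real.exp (-L) := by
      rw [Real.exp_neg, Real.exp_log (by positivity), one_div, inv_inv]
    change Real.exp _ ≤ 4 * ε at hAC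
    rw [hεL, show 7 / 4 * (s / 2) ^ 2 = 7 / 16 * L by rw [← hs2]; ring] at hAC
    have : Real.exp (9 / 16 * L) ≤ 4 := by
      rw [show 9 / 16 * L = -(7 / 16 * L) - -L by ring, Real.exp_sub, div_le_iff₀ (Real.exp_pos _)]
      linarith
    nlinarith [Real.add_one_le_exp (9 / 16 * L)]
  have hsmall : ∀ i, a i ≤ δ / 4 := fun i => by
    rw [show δ / 4 = 25 / s by ring, le_div_iff₀ hs]
    linarith [hsa i]
  exact tailPr_add_le_half_of_small a ha hsum ht (by positivity) hsmall hshift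

end Induction

theorem hasLocalChernoff (n : ℕ) : HasLocalChernoff 100 n := by
  induction n with
  | zero => intro a t _ hsum; simp at hsum
  | succ n ih =>
    intro a t ha hsum ht hε
    by_cases hheavy : ∃ i, Real.log 2 < Real.log (1 / tailPr (n + 1) a t) * a i ^ 2
    · obtain ⟨i, hi⟩ := hheavy
      rcases lt_or_ge t (a i) with hti | hit
      · exact tailPr_add_le_half_of_lt_coeff hsum ht hti
      · exact ih.tailPr_add_le_half_of_heavy (by norm_num) ha hsum hε hi hit
    · simp only [not_exists, not_lt] at hheavy
      exact tailPr_add_le_half_of_light ha hsum ht hε hheavy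

theorem local_chernoff_rademacher :
    ∃ C : ℝ, 0 < C ∧ ∀ (n : ℕ) (a : Fin n → ℝ) (t ε : ℝ),
      (∀ i, 0 ≤ a i) → (∑ i, (a i) ^ 2) = 1 → 0 ≤ t →
      ε = cubePr n (fun x => t < lin n a x) → 0 < ε →
      cubePr n (fun x => t + C / Real.sqrt (Real.log (1 / ε)) < lin n a x) ≤ ε / 2 := by
  refine ⟨100, by norm_num, fun n a t ε ha hsum ht hε hεpos => ?_⟩
  subst hε
  exact hasLocalChernoff n a t ha hsum ht hεpos

end
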